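/- arXiv:1806.06434 — 2 statements merged into one kernel-verified Lean document; each statement's English description precedes it below -/
import Mathlib

section
/- A function f : S^{3×3} → ℝ is symmetric polyaffine (i.e., both f and −f are symmetric polyconvex) if and only if f is affine, i.e., there exist B ∈ S^{3×3} and b ∈ ℝ such that f(ε) = B:ε + b for all ε ∈ S^{3×3}. -/
/-!
Along a rank-one line `F + t a⊗b` the map `F ↦ (F, cof F, det F)` is affine in `t`, and for
symmetric `F` the symmetric part of `F + t a⊗b` is `F + t a⊙b`. Hence if `f` and `-f` are
symmetric polyconvex, `f` is affine on every line of direction `a⊙b` in `S^{3×3}`. Affinity in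
the directions `a⊙a`, `b⊙b` and `a⊙a - b⊙b = (a+b)⊙(a-b)` makes the mixed second difference of
`f` vanish, so the slope of `f` along `a⊙a` does not depend on the base point. The matrices
`a⊙a` span `S^{3×3}`, so `f - f 0` is linear there, i.e. of the form `B : ε` with `B` symmetric.
Conversely `G (F, C, d) = B : Fˢ + b` is affine, so an affine `f` is symmetric polyaffine.
-/

open Matrix

/-- The symmetric part `(F + Fᵀ)/2` of a 3×3 matrix. -/
noncomputable def symPart (F : Matrix (Fin 3) (Fin 3) ℝ) : Matrix (Fin 3) (Fin 3) ℝ :=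
  (1 / 2 : ℝ) • (F + Fᵀ)

/-- The cofactor matrix: `(cof F)_{ij} = (-1)^{i+j}` times the determinant of the 2×2
matrix obtained from `F` by deleting row `i` and column `j`. -/
noncomputable def cof (F : Matrix (Fin 3) (Fin 3) ℝ) : Matrix (Fin 3) (Fin 3) ℝ :=
  Matrix.of fun i j =>
    (-1 : ℝ) ^ ((i : ℕ) + (j : ℕ)) * (F.submatrix i.succAbove j.succAbove).det

/-- Frobenius inner product `A:B = Σ_{i,j} A_{ij} B_{ij}` of 3×3 matrices. -/
def mdot (A B : Matrix (Fin 3) (Fin 3) ℝ) : ℝ := ∑ i, ∑ j, A i j * B i j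

/-- A function `W : ℝ^{3×3} → ℝ` is polyconvex if there is a convex function
`G : ℝ^{3×3} × ℝ^{3×3} × ℝ → ℝ` with `W F = G (F, cof F, det F)` for all `F`. -/
def Polyconvex3 (W : Matrix (Fin 3) (Fin 3) ℝ → ℝ) : Prop :=
  ∃ G : Matrix (Fin 3) (Fin 3) ℝ × Matrix (Fin 3) (Fin 3) ℝ × ℝ → ℝ,
    ConvexOn ℝ Set.univ G ∧ ∀ F : Matrix (Fin 3) (Fin 3) ℝ, W F = G (F, cof F, F.det)

/-- `f : S^{3×3} → ℝ` is symmetric polyconvex if `F ↦ f (Fˢ)` is polyconvex. -/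
def SymPolyconvex3 (f : Matrix (Fin 3) (Fin 3) ℝ → ℝ) : Prop :=
  Polyconvex3 (fun F => f (symPart F))

/-- `B ∈ S^{3×3}` is negative semi-definite: `Bx·x ≤ 0` for all `x ∈ ℝ³`. -/
def NegSemidefM (B : Matrix (Fin 3) (Fin 3) ℝ) : Prop :=
  ∀ x : Fin 3 → ℝ, B.mulVec x ⬝ᵥ x ≤ 0

/-- `A ∈ S^{3×3}` is positive semi-definite: `Ax·x ≥ 0` for all `x ∈ ℝ³`. -/
def PosSemidefM (A : Matrix (Fin 3) (Fin 3) ℝ) : Prop :=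
  ∀ x : Fin 3 → ℝ, 0 ≤ A.mulVec x ⬝ᵥ x

/-- The symmetrized tensor product `a ⊙ b = (a⊗b + b⊗a)/2`. -/
noncomputable def symProd (a b : Fin 3 → ℝ) : Matrix (Fin 3) (Fin 3) ℝ :=
  (1 / 2 : ℝ) • (vecMulVec a b + vecMulVec b a)

/-- `f : S^{3×3} → ℝ` is symmetric rank-one convex if `t ↦ f (ε + t a⊙b)` is convex
for every symmetric `ε` and all `a, b ∈ ℝ³`. -/
def SymRankOneConvex3 (f : Matrix (Fin 3) (Fin 3) ℝ → ℝ) : Prop :=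
  ∀ ε : Matrix (Fin 3) (Fin 3) ℝ, ε.IsSymm → ∀ a b : Fin 3 → ℝ,
    ConvexOn ℝ Set.univ (fun t : ℝ => f (ε + t • symProd a b))

open Set Submodule

lemma eq_add_mul_sub_of_convexOn_neg {g : ℝ → ℝ} (hg : ConvexOn ℝ univ g)
    (hng : ConvexOn ℝ univ fun t => -g t) (t : ℝ) : g t = g 0 + t * (g 1 - g 0) := by
  have hslope : ∀ s u : ℝ, s ≠ 0 → u ≠ 0 → s ≤ u → (g s - g 0) / s = (g u - g 0) / u := by
    intro s u hs hu hsu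
    have h := hg.secant_mono trivial trivial trivial hs hu hsu
    have hn := hng.secant_mono trivial trivial trivial hs hu hsu
    rw [neg_sub_neg, neg_sub_neg, ← neg_sub (g s), ← neg_sub (g u), neg_div, neg_div] at hn
    simp only [sub_zero] at h hn
    linarith
  rcases eq_or_ne t 0 with rfl | ht
  · simp
  have : (g t - g 0) / t = g 1 - g 0 := by
    rcases le_total t 1 with h | h
    · simpa using hslope t 1 ht one_ne_zero h
    · simpa using (hslope 1 t one_ne_zero ht h).symm
  field_simp at this
  linarith

section AffineOnLines

variable {V E : Type*} [AddCommGroup V] [Module ℝ V] [AddCommGroup E] [Module ℝ E]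

def AffineOnLines (f : V → E) (v : V) : Prop :=
  ∀ x (t : ℝ), f (x + t • v) = f x + t • (f (x + v) - f x)

lemma affineOnLines_id (v : V) : AffineOnLines (fun x : V => x) v := by
  intro x t
  simp

lemma AffineOnLines.prod {F : Type*} [AddCommGroup F] [Module ℝ F] {φ : V → E} {ψ : V → F}
    {v : V} (hφ : AffineOnLines φ v) (hψ : AffineOnLines ψ v) :
    AffineOnLines (fun x => (φ x, ψ x)) v := fun x t =>
  Prod.ext (hφ x t) (hψ x t)

lemma AffineOnLines.convexOn_comp {φ : V → E} {v : V} (hφ : AffineOnLines φ v) {G : E → ℝ}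
    (hG : ConvexOn ℝ univ G) (x : V) : ConvexOn ℝ univ fun t : ℝ => G (φ (x + t • v)) := by
  have hline : (fun t : ℝ => G (φ (x + t • v))) =
      G ∘ AffineMap.lineMap (φ x) (φ (x + v)) := by
    funext t
    rw [Function.comp_apply, AffineMap.lineMap_apply_module', hφ x t, add_comm]
  simpa [hline] using hG.comp_affineMap (AffineMap.lineMap (φ x) (φ (x + v)))

variable {f : V → ℝ} {v w : V}

lemma AffineOnLines.map_add_add (hv : AffineOnLines f v) (hw : AffineOnLines f w)
    (hvw : AffineOnLines f (v - w)) (x : V) :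
    f (x + v + w) + f x = f (x + v) + f (x + w) := by
  -- `h₁` and `h₂` evaluate `f (x - w + 2 • v)` in two ways.
  have h₁ := hvw (x + w) 2
  have h₂ := hv (x - w) 2
  have h₃ := hw x (-1)
  have h₄ := hw (x + v) (-1)
  rw [show x + w + (2 : ℝ) • (v - w) = x - w + (2 : ℝ) • v by module,
    show x + w + (v - w) = x + v by abel] at h₁
  rw [show x + (-1 : ℝ) • w = x - w by module] at h₃
  rw [show x + v + (-1 : ℝ) • w = x - w + v by module] at h₄
  simp only [smul_eq_mul] at h₁ h₂ h₃ h₄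
  linarith

lemma AffineOnLines.slope_add_smul (hv : AffineOnLines f v) (hw : AffineOnLines f w)
    (hvw : AffineOnLines f (v - w)) (x : V) (t : ℝ) :
    f (x + t • w + v) - f (x + t • w) = f (x + v) - f x := by
  have h₁ := hw (x + v) t
  have h₂ := hw x t
  have h₃ := hv.map_add_add hw hvw x
  rw [add_right_comm]
  simp only [smul_eq_mul] at h₁ h₂
  linear_combination h₁ - h₂ + t * h₃

def affineDirections (f : V → ℝ) : Submodule ℝ V where
  carrier := {v | ∀ x (t : ℝ), f (x + t • v) = f x + t * (f v - f 0)}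
  zero_mem' := by simp
  add_mem' {v w} hv hw x t := by
    have hvw := hw v 1
    rw [one_smul, one_mul] at hvw
    rw [smul_add, ← add_assoc, hw, hv, hvw]
    ring
  smul_mem' c v hv x t := by
    have hcv := hv 0 c
    rw [zero_add] at hcv
    rw [smul_smul, hv, hcv]
    ring

lemma exists_linearMap_of_affineDirections_eq_top (hf : affineDirections f = ⊤) :
    ∃ L : V →ₗ[ℝ] ℝ, ∀ x, f x = L x + f 0 := by
  have hmem : ∀ v, v ∈ affineDirections f := fun v => hf ▸ mem_top
  refine ⟨{ toFun := fun x => f x - f 0, map_add' := ?_, map_smul' := ?_ }, fun x => ?_⟩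
  · intro x y
    have := hmem y x 1
    rw [one_smul, one_mul] at this
    simp only [this]
    ring
  · intro c x
    have := hmem x 0 c
    rw [zero_add] at this
    simp only [this, smul_eq_mul, RingHom.id_apply]
    ring
  · simp

lemma slope_eq_of_mem_span {S : Set V} (hS : ∀ v ∈ S, AffineOnLines f v)
    (hsub : ∀ v ∈ S, ∀ w ∈ S, AffineOnLines f (v - w)) {v : V} (hv : v ∈ S) {y : V}
    (hy : y ∈ span ℝ S) (x : V) : f (x + y + v) - f (x + y) = f (x + v) - f x := by
  induction hy using Submodule.closure_induction generalizing x with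
  | zero => simp
  | add y z _ _ hy hz => rw [← add_assoc, hz, hy]
  | smul_mem t w hw => exact (hS v hv).slope_add_smul (hS w hw) (hsub v hv w hw) x t

theorem exists_linearMap_of_affineOnLines {S : Set V} (hspan : span ℝ S = ⊤)
    (hS : ∀ v ∈ S, AffineOnLines f v) (hsub : ∀ v ∈ S, ∀ w ∈ S, AffineOnLines f (v - w)) :
    ∃ L : V →ₗ[ℝ] ℝ, ∀ x, f x = L x + f 0 := by
  refine exists_linearMap_of_affineDirections_eq_top (eq_top_iff.2 ?_)
  rw [← hspan, span_le]
  intro v hv x t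
  have hslope := slope_eq_of_mem_span hS hsub hv (hspan ▸ mem_top : x ∈ span ℝ S) 0
  rw [zero_add, zero_add] at hslope
  rw [hS v hv, hslope, smul_eq_mul]

end AffineOnLines

section Matrices

variable (n R : Type*) [CommSemiring R]

def symmetricMatrices : Submodule R (Matrix n n R) where
  carrier := {A | A.IsSymm}
  zero_mem' := isSymm_zero
  add_mem' := IsSymm.add
  smul_mem' c _ hA := hA.smul c

end Matrices

local notation "M₃" => Matrix (Fin 3) (Fin 3) ℝ
local notation "S₃" => symmetricMatrices (Fin 3) ℝ

lemma symProd_comm (a b : Fin 3 → ℝ) : symProd a b = symProd b a := by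
  rw [symProd, symProd, add_comm]

lemma symProd_isSymm (a b : Fin 3 → ℝ) : (symProd a b).IsSymm := by
  rw [IsSymm, symProd, transpose_smul, transpose_add, transpose_vecMulVec, transpose_vecMulVec,
    add_comm]

lemma symProd_self_sub_symProd_self (a b : Fin 3 → ℝ) :
    symProd a a - symProd b b = symProd (a + b) (a - b) := by
  ext i j
  simp only [symProd, Matrix.sub_apply, Matrix.smul_apply, Matrix.add_apply, vecMulVec_apply,
    Pi.add_apply, Pi.sub_apply, smul_eq_mul]
  ring

lemma symProd_eq_polarization (a b : Fin 3 → ℝ) :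
    symProd a b = (1 / 4 : ℝ) • (symProd (a + b) (a + b) - symProd (a - b) (a - b)) := by
  ext i j
  simp only [symProd, Matrix.sub_apply, Matrix.smul_apply, Matrix.add_apply, vecMulVec_apply,
    Pi.add_apply, Pi.sub_apply, smul_eq_mul]
  ring

lemma sum_smul_symProd_single {ε : M₃} (hε : ε.IsSymm) :
    ∑ i, ∑ j, ε i j • symProd (Pi.single i 1) (Pi.single j 1) = ε := by
  ext k l
  simp [symProd, Matrix.sum_apply, vecMulVec_apply, Pi.single_apply,
    Finset.sum_add_distrib, hε.apply k l]
  ring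

lemma symPart_add_smul_vecMulVec {ε : M₃} (hε : ε.IsSymm) (a b : Fin 3 → ℝ) (t : ℝ) :
    symPart (ε + t • vecMulVec a b) = ε + t • symProd a b := by
  rw [symPart, symProd, transpose_add, transpose_smul, transpose_vecMulVec, hε.eq]
  module

lemma symPart_isSymm (F : M₃) : (symPart F).IsSymm := by
  rw [IsSymm, symPart, transpose_smul, transpose_add, transpose_transpose, add_comm]

lemma affineOnLines_cof (a b : Fin 3 → ℝ) : AffineOnLines cof (vecMulVec a b) := by
  intro F t
  ext i j
  fin_cases i <;> fin_cases j <;>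
    simp [cof, det_fin_two, Fin.succAbove, vecMulVec] <;> ring

lemma affineOnLines_det (a b : Fin 3 → ℝ) : AffineOnLines det (vecMulVec a b) := by
  intro F t
  simp [det_fin_three, vecMulVec]
  ring

lemma SymPolyconvex3.symRankOneConvex3 {f : M₃ → ℝ} (hf : SymPolyconvex3 f) :
    SymRankOneConvex3 f := by
  obtain ⟨G, hG, hGf⟩ := hf
  intro ε hε a b
  have hφ : AffineOnLines (fun F : M₃ => (F, cof F, F.det)) (vecMulVec a b) :=
    (affineOnLines_id _).prod ((affineOnLines_cof a b).prod (affineOnLines_det a b))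
  simpa only [← hGf, symPart_add_smul_vecMulVec hε] using hφ.convexOn_comp hG ε

noncomputable def symProdSym (a b : Fin 3 → ℝ) : S₃ := ⟨symProd a b, symProd_isSymm a b⟩

lemma sum_smul_symProdSym_single {ε : M₃} (hε : ε.IsSymm) :
    ∑ i, ∑ j, ε i j • symProdSym (Pi.single i 1) (Pi.single j 1) = ⟨ε, hε⟩ := by
  ext1
  simpa [symProdSym] using sum_smul_symProd_single hε

lemma span_range_symProdSym_self : span ℝ (range fun a => symProdSym a a) = ⊤ := by
  have hgen : ∀ a b, symProdSym a b ∈ span ℝ (range fun a => symProdSym a a) := by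
    intro a b
    have hpol : symProdSym a b =
        (1 / 4 : ℝ) • (symProdSym (a + b) (a + b) - symProdSym (a - b) (a - b)) :=
      Subtype.ext (symProd_eq_polarization a b)
    rw [hpol]
    exact smul_mem _ _ (sub_mem (subset_span ⟨_, rfl⟩) (subset_span ⟨_, rfl⟩))
  refine eq_top_iff.2 fun ⟨ε, hε⟩ _ => ?_
  rw [← sum_smul_symProdSym_single hε]
  exact sum_mem fun i _ => sum_mem fun j _ => smul_mem _ _ (hgen _ _)

lemma exists_isSymm_mdot_eq (L : S₃ →ₗ[ℝ] ℝ) :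
    ∃ B : M₃, B.IsSymm ∧ ∀ ε (hε : ε.IsSymm), L ⟨ε, hε⟩ = mdot B ε := by
  refine ⟨of fun i j => L (symProdSym (Pi.single i 1) (Pi.single j 1)), ?_, fun ε hε => ?_⟩
  · refine IsSymm.ext fun i j => ?_
    simp only [of_apply, symProdSym, symProd_comm]
  · rw [← sum_smul_symProdSym_single hε, mdot]
    simp [map_sum, mul_comm]

theorem SymRankOneConvex3.exists_isSymm_eq_mdot_add {f : M₃ → ℝ} (hf : SymRankOneConvex3 f)
    (hnf : SymRankOneConvex3 fun ε => -f ε) :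
    ∃ B : M₃, ∃ b : ℝ, B.IsSymm ∧ ∀ ε : M₃, ε.IsSymm → f ε = mdot B ε + b := by
  let g : S₃ → ℝ := fun ε => f ε
  have hline : ∀ a b, AffineOnLines g (symProdSym a b) := by
    rintro a b ⟨ε, hε⟩ t
    simpa [g, symProdSym] using eq_add_mul_sub_of_convexOn_neg (hf ε hε a b) (hnf ε hε a b) t
  obtain ⟨L, hL⟩ := exists_linearMap_of_affineOnLines span_range_symProdSym_self
    (by rintro _ ⟨a, rfl⟩; exact hline a a)
    (by
      rintro _ ⟨a, rfl⟩ _ ⟨b, rfl⟩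
      rw [show symProdSym a a - symProdSym b b = symProdSym (a + b) (a - b) from
        Subtype.ext (symProd_self_sub_symProd_self a b)]
      exact hline _ _)
  obtain ⟨B, hB, hBL⟩ := exists_isSymm_mdot_eq L
  exact ⟨B, g 0, hB, fun ε hε => by rw [← hBL ε hε]; exact hL ⟨ε, hε⟩⟩

def mdotLinear (B : M₃) : M₃ →ₗ[ℝ] ℝ where
  toFun := mdot B
  map_add' X Y := by simp [mdot, mul_add, Finset.sum_add_distrib]
  map_smul' c X := by simp [mdot, Finset.mul_sum, mul_left_comm]

noncomputable def symPartLinear : M₃ →ₗ[ℝ] M₃ where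
  toFun := symPart
  map_add' X Y := by simp only [symPart, transpose_add]; module
  map_smul' c X := by simp only [symPart, transpose_smul, RingHom.id_apply]; module

lemma symPolyconvex3_of_eq_mdot_add {f : M₃ → ℝ} (B : M₃) (b : ℝ)
    (hf : ∀ ε : M₃, ε.IsSymm → f ε = mdot B ε + b) : SymPolyconvex3 f :=
  ⟨fun p => (mdotLinear B).comp (symPartLinear.comp (LinearMap.fst ℝ _ _)) p + b,
    (LinearMap.convexOn _ convex_univ).add_const b, fun F => hf _ (symPart_isSymm F)⟩

lemma mdot_neg_left (B X : M₃) : mdot (-B) X = -mdot B X := by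
  simp [mdot]

/-- A function on `S^{3×3}` is symmetric polyaffine iff it is affine. -/
theorem symmetric_polyaffine_iff_affine_3d (f : Matrix (Fin 3) (Fin 3) ℝ → ℝ) :
    (SymPolyconvex3 f ∧ SymPolyconvex3 (fun ε => -f ε)) ↔
      ∃ (B : Matrix (Fin 3) (Fin 3) ℝ) (b : ℝ), B.IsSymm ∧
        ∀ ε : Matrix (Fin 3) (Fin 3) ℝ, ε.IsSymm → f ε = mdot B ε + b := by
  constructor
  · rintro ⟨hf, hnf⟩
    exact hf.symRankOneConvex3.exists_isSymm_eq_mdot_add hnf.symRankOneConvex3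
  · rintro ⟨B, b, -, hB⟩
    refine ⟨symPolyconvex3_of_eq_mdot_add B b hB, symPolyconvex3_of_eq_mdot_add (-B) (-b) ?_⟩
    intro ε hε
    rw [hB ε hε, mdot_neg_left]
    ring
end

section
/- Let f₀ : S^{3×3} → ℝ be given by f₀(ε) = (ε₁₃−ε₂₃)² + (ε₁₂−ε₁₃)² + (ε₁₂−ε₂₃)² + ε₁₁² + ε₂₂² + ε₃₃², and let M = {ε ∈ S^{3×3} : |ε| = 1 and ε = a⊙b for some a, b ∈ ℝ³}. Then f₀ attains its minimum on M, and the minimum value η = min_{ε ∈ M} f₀(ε) satisfies 0 < η ≤ 1/3. -/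
open Matrix

/-- `f₀(ε) = (ε₁₃−ε₂₃)² + (ε₁₂−ε₁₃)² + (ε₁₂−ε₂₃)² + ε₁₁² + ε₂₂² + ε₃₃²`. -/
noncomputable def f0 (ε : Matrix (Fin 3) (Fin 3) ℝ) : ℝ :=
  (ε 0 2 - ε 1 2) ^ 2 + (ε 0 1 - ε 0 2) ^ 2 + (ε 0 1 - ε 1 2) ^ 2
    + (ε 0 0) ^ 2 + (ε 1 1) ^ 2 + (ε 2 2) ^ 2

/-- `M = {ε ∈ S^{3×3} : |ε| = 1, ε = a ⊙ b for some a, b ∈ ℝ³}`. -/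
noncomputable def Mset : Set (Matrix (Fin 3) (Fin 3) ℝ) :=
  {ε | Real.sqrt (∑ i, ∑ j, (ε i j) ^ 2) = 1 ∧ ∃ a b : Fin 3 → ℝ, ε = symProd a b}

lemma symProd_apply (a b : Fin 3 → ℝ) (i j : Fin 3) :
    symProd a b i j = (a i * b j + a j * b i) / 2 := by
  simp [symProd, vecMulVec, Matrix.smul_apply, Matrix.add_apply]; ring

lemma f0_nonneg (ε : Matrix (Fin 3) (Fin 3) ℝ) : 0 ≤ f0 ε := by
  unfold f0; positivity

lemma f0_pos_on_M (ε : Matrix (Fin 3) (Fin 3) ℝ) (hε : ε ∈ Mset) : 0 < f0 ε := by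
  obtain ⟨hn, a, b, rfl⟩ := hε
  rcases lt_or_eq_of_le (f0_nonneg (symProd a b)) with h | h
  · exact h
  exfalso
  unfold f0 at h
  have q1 : symProd a b 0 2 - symProd a b 1 2 = 0 := by
    nlinarith [sq_nonneg (symProd a b 0 2 - symProd a b 1 2),
      sq_nonneg (symProd a b 0 1 - symProd a b 0 2),
      sq_nonneg (symProd a b 0 1 - symProd a b 1 2),
      sq_nonneg (symProd a b 0 0), sq_nonneg (symProd a b 1 1), sq_nonneg (symProd a b 2 2)]
  have q2 : symProd a b 0 1 - symProd a b 0 2 = 0 := by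
    nlinarith [sq_nonneg (symProd a b 0 2 - symProd a b 1 2),
      sq_nonneg (symProd a b 0 1 - symProd a b 0 2),
      sq_nonneg (symProd a b 0 1 - symProd a b 1 2),
      sq_nonneg (symProd a b 0 0), sq_nonneg (symProd a b 1 1), sq_nonneg (symProd a b 2 2)]
  have q4 : symProd a b 0 0 = 0 := by
    nlinarith [sq_nonneg (symProd a b 0 2 - symProd a b 1 2),
      sq_nonneg (symProd a b 0 1 - symProd a b 0 2),
      sq_nonneg (symProd a b 0 1 - symProd a b 1 2),
      sq_nonneg (symProd a b 0 0), sq_nonneg (symProd a b 1 1), sq_nonneg (symProd a b 2 2)]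
  have q5 : symProd a b 1 1 = 0 := by
    nlinarith [sq_nonneg (symProd a b 0 2 - symProd a b 1 2),
      sq_nonneg (symProd a b 0 1 - symProd a b 0 2),
      sq_nonneg (symProd a b 0 1 - symProd a b 1 2),
      sq_nonneg (symProd a b 0 0), sq_nonneg (symProd a b 1 1), sq_nonneg (symProd a b 2 2)]
  have q6 : symProd a b 2 2 = 0 := by
    nlinarith [sq_nonneg (symProd a b 0 2 - symProd a b 1 2),
      sq_nonneg (symProd a b 0 1 - symProd a b 0 2),
      sq_nonneg (symProd a b 0 1 - symProd a b 1 2),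
      sq_nonneg (symProd a b 0 0), sq_nonneg (symProd a b 1 1), sq_nonneg (symProd a b 2 2)]
  rw [symProd_apply] at q4 q5 q6
  rw [symProd_apply, symProd_apply] at q1 q2
  set a0 := a 0; set a1 := a 1; set a2 := a 2
  set b0 := b 0; set b1 := b 1; set b2 := b 2
  have e1 : a0 * b0 = 0 := by linarith
  have e2 : a1 * b1 = 0 := by linarith
  have e3 : a2 * b2 = 0 := by linarith
  set t : ℝ := (a0 * b1 + a1 * b0) / 2 with ht
  have h12 : a0 * b1 + a1 * b0 = 2 * t := by rw [ht]; ring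
  have h13 : a0 * b2 + a2 * b0 = 2 * t := by rw [ht]; linarith
  have h23 : a1 * b2 + a2 * b1 = 2 * t := by rw [ht]; linarith
  have hcube : t ^ 3 = 0 := by
    linear_combination (-(1:ℝ)/8)*(4*t^2)*h12 + (-(1:ℝ)/8)*(2*t*(a0*b1+a1*b0))*h13
      + (-(1:ℝ)/8)*((a0*b1+a1*b0)*(a0*b2+a2*b0))*h23
      + ((1:ℝ)/8)*(2*a1*a2*b1*b2 + a2^2*b1^2 + a1^2*b2^2)*e1
      + ((1:ℝ)/8)*(a0^2*b2^2 + a2^2*b0^2)*e2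
      + ((1:ℝ)/8)*(a0^2*b1^2 + a1^2*b0^2)*e3
  have ht0 : t = 0 := pow_eq_zero_iff (by norm_num) |>.mp hcube
  have hsum : ∑ i, ∑ j, (symProd a b i j)^2 = 0 := by
    simp only [Fin.sum_univ_three, symProd_apply]
    rw [ht0] at h12 h13 h23
    linear_combination (a0*b0)*e1 + (a1*b1)*e2 + (a2*b2)*e3
      + ((a0*b1+a1*b0)/2)*h12 + ((a0*b2+a2*b0)/2)*h13 + ((a1*b2+a2*b1)/2)*h23
  rw [hsum] at hn
  simp at hn

lemma frob_symProd (a b : Fin 3 → ℝ) :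
    ∑ i, ∑ j, (symProd a b i j)^2
      = ((∑ i, a i ^ 2) * (∑ i, b i ^ 2) + (∑ i, a i * b i) ^ 2) / 2 := by
  simp [symProd_apply, Fin.sum_univ_three]; ring

lemma symProd_smul (c d : ℝ) (a b : Fin 3 → ℝ) :
    symProd (c • a) (d • b) = (c * d) • symProd a b := by
  ext i j
  simp [symProd_apply, Matrix.smul_apply, Pi.smul_apply, smul_eq_mul]
  ring

lemma f0_symProd (a b : Fin 3 → ℝ) :
    f0 (symProd a b) =
      ((a 0 * b 2 + a 2 * b 0) / 2 - (a 1 * b 2 + a 2 * b 1) / 2) ^ 2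
      + ((a 0 * b 1 + a 1 * b 0) / 2 - (a 0 * b 2 + a 2 * b 0) / 2) ^ 2
      + ((a 0 * b 1 + a 1 * b 0) / 2 - (a 1 * b 2 + a 2 * b 1) / 2) ^ 2
      + (a 0 * b 0) ^ 2 + (a 1 * b 1) ^ 2 + (a 2 * b 2) ^ 2 := by
  unfold f0
  simp only [symProd_apply]
  ring

set_option maxHeartbeats 2000000 in
/-- `f₀` attains its minimum on `M`, and the minimum value `η` satisfies `0 < η ≤ 1/3`. -/
theorem f0_attains_min_and_bounds :
    ∃ ε ∈ Mset, (∀ ε' ∈ Mset, f0 ε ≤ f0 ε') ∧ 0 < f0 ε ∧ f0 ε ≤ 1 / 3 := by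
  classical
  let N : (Fin 3 → ℝ) × (Fin 3 → ℝ) → ℝ :=
    fun p => ∑ i, ∑ j, (symProd p.1 p.2 i j)^2
  let g : (Fin 3 → ℝ) × (Fin 3 → ℝ) → ℝ := fun p => f0 (symProd p.1 p.2)
  let K : Set ((Fin 3 → ℝ) × (Fin 3 → ℝ)) :=
    {p | N p = 1 ∧ (∑ i, p.1 i ^ 2) ≤ 2 ∧ (∑ i, p.2 i ^ 2) ≤ 2}
  have hNc : Continuous N := by
    have : N = fun p => ((∑ i, p.1 i ^ 2) * (∑ i, p.2 i ^ 2) + (∑ i, p.1 i * p.2 i) ^ 2) / 2 := by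
      funext p; exact frob_symProd p.1 p.2
    rw [this]
    fun_prop
  have hgc : Continuous g := by
    have : g = fun p : (Fin 3 → ℝ) × (Fin 3 → ℝ) =>
      ((p.1 0 * p.2 2 + p.1 2 * p.2 0) / 2 - (p.1 1 * p.2 2 + p.1 2 * p.2 1) / 2) ^ 2
      + ((p.1 0 * p.2 1 + p.1 1 * p.2 0) / 2 - (p.1 0 * p.2 2 + p.1 2 * p.2 0) / 2) ^ 2
      + ((p.1 0 * p.2 1 + p.1 1 * p.2 0) / 2 - (p.1 1 * p.2 2 + p.1 2 * p.2 1) / 2) ^ 2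
      + (p.1 0 * p.2 0) ^ 2 + (p.1 1 * p.2 1) ^ 2 + (p.1 2 * p.2 2) ^ 2 := by
      funext p; exact f0_symProd p.1 p.2
    rw [this]
    fun_prop
  have hKclosed : IsClosed K := by
    have h1 : IsClosed {p : (Fin 3 → ℝ) × (Fin 3 → ℝ) | N p = 1} :=
      isClosed_eq hNc continuous_const
    have h2 : IsClosed {p : (Fin 3 → ℝ) × (Fin 3 → ℝ) | (∑ i, p.1 i ^ 2) ≤ 2} := by
      apply isClosed_le _ continuous_const
      fun_prop
    have h3 : IsClosed {p : (Fin 3 → ℝ) × (Fin 3 → ℝ) | (∑ i, p.2 i ^ 2) ≤ 2} := by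
      apply isClosed_le _ continuous_const
      fun_prop
    exact (h1.inter (h2.inter h3))
  have hKbdd : Bornology.IsBounded K := by
    apply Bornology.IsBounded.subset (Metric.isBounded_closedBall (x := (0 : (Fin 3 → ℝ) × (Fin 3 → ℝ))) (r := 2))
    intro p hp
    obtain ⟨-, h1, h2⟩ := hp
    rw [Metric.mem_closedBall, dist_zero_right]
    have key : ∀ (v : Fin 3 → ℝ), (∑ i, v i ^ 2) ≤ 2 → ‖v‖ ≤ 2 := by
      intro v hv
      rw [pi_norm_le_iff_of_nonneg (by norm_num)]
      intro i
      have hle : v i ^ 2 ≤ ∑ j, v j ^ 2 :=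
        Finset.single_le_sum (f := fun j => v j ^ 2) (fun j _ => sq_nonneg _) (Finset.mem_univ i)
      rw [Real.norm_eq_abs]
      nlinarith [abs_nonneg (v i), sq_abs (v i)]
    rw [Prod.norm_def]
    exact max_le (key p.1 h1) (key p.2 h2)
  have hKcompact : IsCompact K := Metric.isCompact_of_isClosed_isBounded hKclosed hKbdd
  -- witness
  set c : ℝ := Real.sqrt (1/3) with hc
  have hc2 : c ^ 2 = 1/3 := Real.sq_sqrt (by norm_num)
  set w : (Fin 3 → ℝ) × (Fin 3 → ℝ) := (fun _ => c, fun _ => c) with hw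
  have hwK : w ∈ K := by
    refine ⟨?_, ?_, ?_⟩
    · show (∑ i, ∑ j, (symProd w.1 w.2 i j)^2) = 1
      rw [frob_symProd]
      show ((∑ _i : Fin 3, c ^ 2) * (∑ _i : Fin 3, c ^ 2) + (∑ _i : Fin 3, c * c) ^ 2) / 2 = 1
      simp [Fin.sum_univ_three]
      nlinarith [hc2]
    · show (∑ _i : Fin 3, c ^ 2) ≤ 2
      simp [Fin.sum_univ_three]
      nlinarith [hc2]
    · show (∑ _i : Fin 3, c ^ 2) ≤ 2
      simp [Fin.sum_univ_three]
      nlinarith [hc2]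
  have hgw : g w = 1/3 := by
    show f0 (symProd w.1 w.2) = 1/3
    rw [f0_symProd]
    show ((c * c + c * c) / 2 - (c * c + c * c) / 2) ^ 2
      + ((c * c + c * c) / 2 - (c * c + c * c) / 2) ^ 2
      + ((c * c + c * c) / 2 - (c * c + c * c) / 2) ^ 2
      + (c * c) ^ 2 + (c * c) ^ 2 + (c * c) ^ 2 = 1/3
    nlinarith [hc2]
  obtain ⟨p0, hp0K, hmin⟩ := hKcompact.exists_isMinOn ⟨w, hwK⟩ hgc.continuousOn
  have hmin' : ∀ q ∈ K, g p0 ≤ g q := fun q hq => isMinOn_iff.mp hmin q hq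
  have hp0N : (∑ i, ∑ j, (symProd p0.1 p0.2 i j)^2) = 1 := hp0K.1
  refine ⟨symProd p0.1 p0.2, ⟨by rw [hp0N]; exact Real.sqrt_one, p0.1, p0.2, rfl⟩, ?_, ?_, ?_⟩
  · -- minimality
    rintro ε' ⟨hn', a, b, rfl⟩
    have hN1 : ∑ i, ∑ j, (symProd a b i j)^2 = 1 := by
      have hnn : (0:ℝ) ≤ ∑ i, ∑ j, (symProd a b i j)^2 := by positivity
      nlinarith [Real.sq_sqrt hnn, hn']
    set A := ∑ i, a i ^ 2 with hA
    set B := ∑ i, b i ^ 2 with hB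
    set C := ∑ i, a i * b i with hC
    clear_value A B C
    have hfr : (A * B + C ^ 2) / 2 = 1 := by rw [hA, hB, hC, ← frob_symProd]; exact hN1
    have hCS : C ^ 2 ≤ A * B := by
      rw [hA, hB, hC]
      simp only [Fin.sum_univ_three]
      nlinarith [sq_nonneg (a 0 * b 1 - a 1 * b 0), sq_nonneg (a 0 * b 2 - a 2 * b 0),
        sq_nonneg (a 1 * b 2 - a 2 * b 1)]
    have hAB1 : 1 ≤ A * B := by nlinarith
    have hAB2 : A * B ≤ 2 := by nlinarith [sq_nonneg C]
    have hA0 : 0 < A := by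
      rcases lt_or_eq_of_le (by rw [hA]; positivity : (0:ℝ) ≤ A) with h | h
      · exact h
      · exfalso; nlinarith [hB, (by rw [hB]; positivity : (0:ℝ) ≤ B)]
    have hB0 : 0 < B := by nlinarith
    set l : ℝ := Real.sqrt (Real.sqrt (B / A)) with hl
    clear_value l
    have hBA : 0 < B / A := div_pos hB0 hA0
    have hsq : Real.sqrt (B / A) > 0 := Real.sqrt_pos.mpr hBA
    have hl0 : 0 < l := by rw [hl]; exact Real.sqrt_pos.mpr hsq
    have hl2 : l ^ 2 = Real.sqrt (B / A) := by rw [hl]; exact Real.sq_sqrt hsq.le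
    have hprod : symProd (l • a) (l⁻¹ • b) = symProd a b := by
      rw [symProd_smul, mul_inv_cancel₀ hl0.ne', one_smul]
    have hqK : ((l • a, l⁻¹ • b) : (Fin 3 → ℝ) × (Fin 3 → ℝ)) ∈ K := by
      refine ⟨?_, ?_, ?_⟩
      · show (∑ i, ∑ j, (symProd (l • a) (l⁻¹ • b) i j)^2) = 1
        rw [hprod]; exact hN1
      · show (∑ i, (l • a) i ^ 2) ≤ 2
        have heq : (∑ i, (l • a) i ^ 2) = l ^ 2 * A := by
          rw [hA, Finset.mul_sum]
          apply Finset.sum_congr rfl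
          intro i _
          simp [Pi.smul_apply, smul_eq_mul, mul_pow]
        rw [heq, hl2]
        have hx : (Real.sqrt (B / A) * A) ^ 2 = A * B := by
          rw [mul_pow, Real.sq_sqrt hBA.le]
          field_simp
        nlinarith [mul_nonneg (Real.sqrt_nonneg (B / A)) hA0.le]
      · show (∑ i, (l⁻¹ • b) i ^ 2) ≤ 2
        have heq : (∑ i, (l⁻¹ • b) i ^ 2) = (l ^ 2)⁻¹ * B := by
          rw [hB, Finset.mul_sum]
          apply Finset.sum_congr rfl
          intro i _
          simp [Pi.smul_apply, smul_eq_mul, mul_pow]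
        rw [heq, hl2]
        have hx : ((Real.sqrt (B / A))⁻¹ * B) ^ 2 = A * B := by
          rw [mul_pow, inv_pow, Real.sq_sqrt hBA.le]
          field_simp
        nlinarith [mul_nonneg (inv_nonneg.mpr (Real.sqrt_nonneg (B / A))) hB0.le]
    have := hmin' _ hqK
    show f0 (symProd p0.1 p0.2) ≤ f0 (symProd a b)
    calc f0 (symProd p0.1 p0.2) ≤ f0 (symProd (l • a) (l⁻¹ • b)) := this
      _ = f0 (symProd a b) := by rw [hprod]
  · exact f0_pos_on_M _ ⟨by rw [hp0N]; exact Real.sqrt_one, p0.1, p0.2, rfl⟩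
  · calc f0 (symProd p0.1 p0.2) = g p0 := rfl
      _ ≤ g w := hmin' w hwK
      _ = 1/3 := hgw
end
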